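/- arXiv:cs/0407056 — 3 statements merged into one kernel-verified Lean document; each statement's English description precedes it below -/
import Mathlib

section
/- For any two density matrices ρ and ξ on the same finite-dimensional Hilbert space, the fidelity satisfies 1 - (1/2)‖ρ - ξ‖_tr ≤ F(ρ, ξ) ≤ √(1 - (1/4)‖ρ - ξ‖_tr²). -/
open scoped ComplexOrder Matrix

/-- Matrix square root: the positive semidefinite square root of a PSD matrix,
with junk value 0 for non-PSD matrices. -/
noncomputable def sqrtM {i : Type} [Fintype i] [DecidableEq i] (A : Matrix i i Complex) :
    Matrix i i Complex :=
  letI := Classical.propDecidable A.PosSemidef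
  if h : A.PosSemidef then (h.1.eigenvectorUnitary : Matrix i i Complex) *
    Matrix.diagonal ((↑) ∘ (√·) ∘ h.1.eigenvalues) * (star h.1.eigenvectorUnitary : Matrix i i Complex)
  else 0

/-- Trace norm: trace of the square root of X-dagger-X (sum of singular values). -/
noncomputable def traceNorm {i : Type} [Fintype i] [DecidableEq i] (X : Matrix i i Complex) : Real :=
  ((sqrtM (Xᴴ * X)).trace).re

/-- Fidelity F(rho, xi) = trace of the square root of (sqrt rho * xi * sqrt rho). -/
noncomputable def fidelity {i : Type} [Fintype i] [DecidableEq i] (ρ ξ : Matrix i i Complex) : Real :=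
  ((sqrtM (sqrtM ρ * ξ * sqrtM ρ)).trace).re

/-- Outer product of vectors. -/
noncomputable def outer {i : Type} (ψ φ : i → Complex) : Matrix i i Complex :=
  Matrix.of fun p q => ψ p * star (φ q)

/-- Partial trace over the first tensor factor. -/
noncomputable def ptraceFst {α β : Type} [Fintype α] (X : Matrix (α × β) (α × β) Complex) :
    Matrix β β Complex :=
  Matrix.of fun i j => ∑ a : α, X (a, i) (a, j)

/-- Partial trace over the second tensor factor. -/
noncomputable def ptraceSnd {α β : Type} [Fintype β] (X : Matrix (α × β) (α × β) Complex) :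
    Matrix α α Complex :=
  Matrix.of fun i j => ∑ b : β, X (i, b) (j, b)

/-- The extension of a map on matrices by the identity on an auxiliary space. -/
noncomputable def extendId {i k : Type} (f : Matrix i i Complex → Matrix k k Complex)
    (α : Type) (X : Matrix (i × α) (i × α) Complex) : Matrix (k × α) (k × α) Complex :=
  Matrix.of fun p q => f (Matrix.of fun a b => X (a, p.2) (b, q.2)) p.1 q.1

/-- Complete positivity: all extensions by an identity map PSD matrices to PSD matrices. -/
def IsCompletelyPositive {i k : Type} [Fintype i] [DecidableEq i] [Fintype k] [DecidableEq k]
    (f : Matrix i i Complex → Matrix k k Complex) : Prop :=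
  ∀ (r : ℕ) (X : Matrix (i × Fin r) (i × Fin r) Complex), X.PosSemidef →
    (extendId f (Fin r) X).PosSemidef

/-- Trace preservation. -/
def IsTracePreserving {i k : Type} [Fintype i] [Fintype k]
    (f : Matrix i i Complex → Matrix k k Complex) : Prop :=
  ∀ X : Matrix i i Complex, (f X).trace = X.trace

/-- The diamond norm: the supremum of the trace norms of (f tensor I)(X) over all X of
trace norm one, with the identity on an auxiliary space of the same dimension as the input. -/
noncomputable def dnorm {i k : Type} [Fintype i] [DecidableEq i] [Fintype k] [DecidableEq k]
    (f : Matrix i i Complex → Matrix k k Complex) : Real :=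
  sSup {t : Real | ∃ X : Matrix (i × i) (i × i) Complex,
    traceNorm X = 1 ∧ t = traceNorm (extendId f i X)}

/-!
Both bounds rest on the variational formula `‖M‖₁ = max Re tr (G M)` over contractions `G`
(`G Gᴴ ≤ 1`), the maximum being attained at `G = Uᴴ` for the polar decomposition `M = U |M|`;
the fidelity is `F(ρ, ξ) = ‖√ξ √ρ‖₁`.

Lower bound (Powers–Størmer): let `S = √ρ - √ξ`, `T = √ρ + √ξ` and `G` the sign of `S`.
As `ρ - ξ = (S T + T S) / 2` and `G` commutes with `S`,
`Re tr (G (ρ - ξ)) = tr (|S| T) = tr S² + 2 tr (S⁺ √ξ) + 2 tr (S⁻ √ρ) ≥ tr S²`,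
so `2 - 2 Re tr (√ξ √ρ) = tr S² ≤ ‖ρ - ξ‖₁`, and `Re tr (√ξ √ρ) ≤ F`.

Upper bound: let `P` be the projection onto the positive part of `ρ - ξ`, so that
`p - q = ½ ‖ρ - ξ‖₁` for `p = tr P ρ`, `q = tr P ξ`. Splitting
`F = Re tr (Uᴴ √ξ (P + (1 - P)) √ρ)` and applying Cauchy–Schwarz to each part gives
`F ≤ √(p q) + √((1 - p)(1 - q)) ≤ √(1 - (p - q)²)`.
-/

open scoped MatrixOrder

namespace Matrix

variable {𝕜 n : Type*} [RCLike 𝕜] [Fintype n]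

lemma re_trace_mono {A B : Matrix n n 𝕜} (h : A ≤ B) : RCLike.re A.trace ≤ RCLike.re B.trace := by
  have := (le_iff.mp h).trace_nonneg
  rw [trace_sub, sub_nonneg, RCLike.le_iff_re_im] at this
  exact this.1

variable [DecidableEq n]

lemma re_trace_mul_conjTranspose_le (X Y : Matrix n n 𝕜) :
    RCLike.re (X * Yᴴ).trace ≤ √(RCLike.re (X * Xᴴ).trace) * √(RCLike.re (Y * Yᴴ).trace) := by
  let _ := toMatrixSeminormedAddCommGroup (1 : Matrix n n 𝕜) PosSemidef.one
  let _ := toMatrixInnerProductSpace (1 : Matrix n n 𝕜) PosSemidef.one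
  have h := re_inner_le_norm (𝕜 := 𝕜) Y X
  rw [norm_eq_sqrt_re_inner (𝕜 := 𝕜) X, norm_eq_sqrt_re_inner (𝕜 := 𝕜) Y, mul_comm] at h
  change RCLike.re (X * 1 * Yᴴ).trace
    ≤ √(RCLike.re (X * 1 * Xᴴ).trace) * √(RCLike.re (Y * 1 * Yᴴ).trace) at h
  simpa only [Matrix.mul_one] using h

lemma re_trace_mul_nonneg {A B : Matrix n n 𝕜} (hA : 0 ≤ A) (hB : 0 ≤ B) :
    0 ≤ RCLike.re (A * B).trace := by
  have h : (A * B).trace = (CFC.sqrt A * B * CFC.sqrt A).trace := by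
    rw [trace_mul_cycle, CFC.sqrt_mul_sqrt_self A hA]
  simpa [h] using re_trace_mono (conjugate_nonneg_of_nonneg hB (CFC.sqrt_nonneg A))

lemma re_trace_conj_le_of_le_one {C : Matrix n n 𝕜} (hC : C ≤ 1) (X : Matrix n n 𝕜) :
    RCLike.re (X * C * Xᴴ).trace ≤ RCLike.re (X * Xᴴ).trace := by
  simpa [star_eq_conjTranspose] using re_trace_mono (star_right_conjugate_le_conjugate hC X)

lemma conjTranspose_sqrt (A : Matrix n n 𝕜) : (CFC.sqrt A)ᴴ = CFC.sqrt A :=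
  (CFC.sqrt_nonneg A).isSelfAdjoint.star_eq

lemma trace_sqrt_mul_mul_conjTranspose {P : Matrix n n 𝕜} (hP : 0 ≤ P) (X : Matrix n n 𝕜) :
    (CFC.sqrt P * X * (CFC.sqrt P * X)ᴴ).trace = (P * (X * Xᴴ)).trace := by
  conv_rhs => rw [← CFC.sqrt_mul_sqrt_self P hP, ← trace_mul_cycle]
  rw [conjTranspose_mul, conjTranspose_sqrt]
  simp only [Matrix.mul_assoc]

lemma re_trace_conjTranspose_mul_sqrt_mul_mul_sqrt_le {N P ρ ξ : Matrix n n 𝕜}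
    (hN : N * Nᴴ ≤ 1) (hP : 0 ≤ P) (hρ : 0 ≤ ρ) (hξ : 0 ≤ ξ) :
    RCLike.re (Nᴴ * CFC.sqrt ξ * P * CFC.sqrt ρ).trace
      ≤ √(RCLike.re (P * ρ).trace) * √(RCLike.re (P * ξ).trace) := by
  set s := CFC.sqrt P
  have hsqrt : ∀ {A : Matrix n n 𝕜}, 0 ≤ A → CFC.sqrt A * (CFC.sqrt A)ᴴ = A := fun hA => by
    rw [conjTranspose_sqrt, CFC.sqrt_mul_sqrt_self _ hA]
  have hξN : RCLike.re ((s * (CFC.sqrt ξ * N)) * (s * (CFC.sqrt ξ * N))ᴴ).trace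
      ≤ RCLike.re (P * ξ).trace :=
    calc _ = RCLike.re ((s * CFC.sqrt ξ) * (N * Nᴴ) * (s * CFC.sqrt ξ)ᴴ).trace := by
          simp only [conjTranspose_mul, Matrix.mul_assoc]
      _ ≤ RCLike.re ((s * CFC.sqrt ξ) * (s * CFC.sqrt ξ)ᴴ).trace := re_trace_conj_le_of_le_one hN _
      _ = RCLike.re (P * ξ).trace := by rw [trace_sqrt_mul_mul_conjTranspose hP, hsqrt hξ]
  calc RCLike.re (Nᴴ * CFC.sqrt ξ * P * CFC.sqrt ρ).trace
      = RCLike.re ((s * CFC.sqrt ρ) * (s * (CFC.sqrt ξ * N))ᴴ).trace := by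
        have hsplit : Nᴴ * CFC.sqrt ξ * P * CFC.sqrt ρ
            = (Nᴴ * CFC.sqrt ξ * s) * (s * CFC.sqrt ρ) := by
          rw [← CFC.sqrt_mul_sqrt_self P hP]; simp only [s, Matrix.mul_assoc]
        rw [hsplit, trace_mul_comm, conjTranspose_mul, conjTranspose_mul, conjTranspose_sqrt,
          conjTranspose_sqrt, Matrix.mul_assoc]
    _ ≤ √(RCLike.re ((s * CFC.sqrt ρ) * (s * CFC.sqrt ρ)ᴴ).trace) *
          √(RCLike.re ((s * (CFC.sqrt ξ * N)) * (s * (CFC.sqrt ξ * N))ᴴ).trace) :=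
        re_trace_mul_conjTranspose_le _ _
    _ ≤ √(RCLike.re (P * ρ).trace) * √(RCLike.re (P * ξ).trace) := by
        rw [trace_sqrt_mul_mul_conjTranspose hP, hsqrt hρ]
        exact mul_le_mul_of_nonneg_left (Real.sqrt_le_sqrt hξN) (Real.sqrt_nonneg _)

lemma cfc_mul_cfc (A : Matrix n n 𝕜) (f g : ℝ → ℝ) :
    cfc f A * cfc g A = cfc (fun x => f x * g x) A :=
  (cfc_mul f g A (A.finite_real_spectrum.continuousOn f)
    (A.finite_real_spectrum.continuousOn g)).symm

lemma cfc_mul_self {A : Matrix n n 𝕜} (hA : IsSelfAdjoint A) (f : ℝ → ℝ) :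
    cfc f A * A = cfc (fun x => f x * x) A := by
  nth_rw 2 [← cfc_id' ℝ A]
  exact cfc_mul_cfc A f _

lemma self_mul_cfc {A : Matrix n n 𝕜} (hA : IsSelfAdjoint A) (f : ℝ → ℝ) :
    A * cfc f A = cfc (fun x => x * f x) A := by
  nth_rw 1 [← cfc_id' ℝ A]
  exact cfc_mul_cfc A _ f

/-- The partial isometry `U` of the polar decomposition `M = U * |M|`; the pseudo-inverse of `|M|`
is `cfc (·⁻¹) |M|` because `(0 : ℝ)⁻¹ = 0`. -/
noncomputable def polarFactor (M : Matrix n n 𝕜) : Matrix n n 𝕜 :=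
  M * cfc (·⁻¹ : ℝ → ℝ) (CFC.abs M)

lemma polarFactor_mul_abs (M : Matrix n n 𝕜) : polarFactor M * CFC.abs M = M := by
  set A := CFC.abs M
  have hA : IsSelfAdjoint A := (CFC.abs_nonneg M).isSelfAdjoint
  set E := cfc (fun x : ℝ => x⁻¹ * x) A
  have hE : Eᴴ = E := (cfc_predicate _ A : IsSelfAdjoint E).star_eq
  have hAE : A * (1 - E) = 0 := by
    rw [Matrix.mul_sub, Matrix.mul_one, self_mul_cfc hA, sub_eq_zero, eq_comm]
    refine (cfc_congr fun x _ => ?_).trans (cfc_id' ℝ A)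
    by_cases hx : x = 0 <;> simp [hx]
  have hME : M * (1 - E) = 0 := by
    rw [← conjTranspose_mul_self_eq_zero, conjTranspose_mul, conjTranspose_sub, hE,
      conjTranspose_one, Matrix.mul_assoc, ← Matrix.mul_assoc Mᴴ, ← star_eq_conjTranspose,
      ← CFC.abs_mul_abs, Matrix.mul_assoc, hAE, Matrix.mul_zero, Matrix.mul_zero]
  rw [Matrix.mul_sub, Matrix.mul_one, sub_eq_zero] at hME
  rw [polarFactor, Matrix.mul_assoc, cfc_mul_self hA, ← hME]

lemma conjTranspose_polarFactor (M : Matrix n n 𝕜) :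
    (polarFactor M)ᴴ = cfc (·⁻¹ : ℝ → ℝ) (CFC.abs M) * Mᴴ := by
  rw [polarFactor, conjTranspose_mul, ← star_eq_conjTranspose (cfc _ _),
    (cfc_predicate _ _ : IsSelfAdjoint (cfc (·⁻¹ : ℝ → ℝ) (CFC.abs M))).star_eq]

lemma conjTranspose_polarFactor_mul (M : Matrix n n 𝕜) : (polarFactor M)ᴴ * M = CFC.abs M := by
  have hA : IsSelfAdjoint (CFC.abs M) := (CFC.abs_nonneg M).isSelfAdjoint
  rw [conjTranspose_polarFactor, Matrix.mul_assoc, ← star_eq_conjTranspose, ← CFC.abs_mul_abs,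
    ← Matrix.mul_assoc, cfc_mul_self hA, cfc_mul_self hA]
  refine (cfc_congr fun x _ => ?_).trans (cfc_id' ℝ _)
  by_cases hx : x = 0 <;> simp [hx]

lemma isStarProjection_star_polarFactor_mul_self (M : Matrix n n 𝕜) :
    IsStarProjection (star (polarFactor M) * polarFactor M) := by
  have hA : IsSelfAdjoint (CFC.abs M) := (CFC.abs_nonneg M).isSelfAdjoint
  have h : star (polarFactor M) * polarFactor M = cfc (fun x : ℝ => x⁻¹ * x) (CFC.abs M) := by
    rw [star_eq_conjTranspose, conjTranspose_polarFactor, polarFactor, Matrix.mul_assoc,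
      ← Matrix.mul_assoc Mᴴ, ← star_eq_conjTranspose, ← CFC.abs_mul_abs, ← Matrix.mul_assoc,
      ← Matrix.mul_assoc, cfc_mul_self hA, cfc_mul_self hA, cfc_mul_cfc]
    refine cfc_congr fun x _ => ?_
    by_cases hx : x = 0 <;> simp [hx]
  refine ⟨?_, .star_mul_self _⟩
  rw [h, IsIdempotentElem, cfc_mul_cfc]
  refine cfc_congr fun x _ => ?_
  by_cases hx : x = 0 <;> simp [hx]

lemma conjTranspose_polarFactor_mul_self_le_one (M : Matrix n n 𝕜) :
    (polarFactor M)ᴴ * polarFactor M ≤ 1 :=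
  (isStarProjection_star_polarFactor_mul_self M).le_one

lemma polarFactor_mul_conjTranspose_self_le_one (M : Matrix n n 𝕜) :
    polarFactor M * (polarFactor M)ᴴ ≤ 1 :=
  IsStarProjection.le_one ⟨isIdempotentElem_star_mul_self_iff_isIdempotentElem_self_mul_star.mp
    (isStarProjection_star_polarFactor_mul_self M).isIdempotentElem, .mul_star_self _⟩

lemma re_trace_mul_le_re_trace_abs {G : Matrix n n 𝕜} (hG : G * Gᴴ ≤ 1) (M : Matrix n n 𝕜) :
    RCLike.re (G * M).trace ≤ RCLike.re (CFC.abs M).trace := by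
  set s := CFC.sqrt (CFC.abs M)
  have hs : sᴴ = s := conjTranspose_sqrt _
  have hss : s * sᴴ = CFC.abs M := by rw [hs, CFC.sqrt_mul_sqrt_self _ (CFC.abs_nonneg M)]
  have hM : G * M = G * polarFactor M * (s * sᴴ) := by
    rw [hss, Matrix.mul_assoc, polarFactor_mul_abs]
  calc RCLike.re (G * M).trace
      = RCLike.re ((s * G) * (s * (polarFactor M)ᴴ)ᴴ).trace := by
        rw [hM, hs, conjTranspose_mul, conjTranspose_conjTranspose, hs, ← Matrix.mul_assoc,
          trace_mul_cycle]
        simp only [Matrix.mul_assoc]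
    _ ≤ √(RCLike.re ((s * G) * (s * G)ᴴ).trace) *
          √(RCLike.re ((s * (polarFactor M)ᴴ) * (s * (polarFactor M)ᴴ)ᴴ).trace) :=
        re_trace_mul_conjTranspose_le _ _
    _ ≤ √(RCLike.re (CFC.abs M).trace) * √(RCLike.re (CFC.abs M).trace) := by
        have hN := re_trace_conj_le_of_le_one (conjTranspose_polarFactor_mul_self_le_one M) s
        have hG := re_trace_conj_le_of_le_one hG s
        simp only [conjTranspose_mul, conjTranspose_conjTranspose, Matrix.mul_assoc, hss] at hN hG ⊢
        exact mul_le_mul (Real.sqrt_le_sqrt hG) (Real.sqrt_le_sqrt hN) (Real.sqrt_nonneg _)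
          (Real.sqrt_nonneg _)
    _ = RCLike.re (CFC.abs M).trace :=
        Real.mul_self_sqrt (by simpa using re_trace_mono (CFC.abs_nonneg M))

lemma exists_mul_eq_abs {S : Matrix n n 𝕜} (hS : IsSelfAdjoint S) :
    ∃ G : Matrix n n 𝕜, G * Gᴴ ≤ 1 ∧ Commute G S ∧ G * S = CFC.abs S := by
  set G := cfc (fun x : ℝ => if x < 0 then -1 else 1) S
  refine ⟨G, ?_, ?_, ?_⟩
  · rw [← star_eq_conjTranspose, (cfc_predicate _ S : IsSelfAdjoint G).star_eq, cfc_mul_cfc]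
    refine cfc_le_one _ _ fun x _ => ?_
    split_ifs <;> norm_num
  · rw [Commute, SemiconjBy, cfc_mul_self hS, self_mul_cfc hS]
    exact cfc_congr fun x _ => mul_comm _ _
  · rw [cfc_mul_self hS, CFC.abs_eq_cfc_norm S hS]
    refine cfc_congr fun x _ => ?_
    rcases lt_or_ge x 0 with hx | hx
    · simp [hx, abs_of_neg hx]
    · simp [not_lt.mpr hx, abs_of_nonneg hx]

/-- Powers–Størmer inequality. -/
lemma re_trace_sub_mul_sub_le_re_trace_abs {a b : Matrix n n 𝕜} (ha : 0 ≤ a) (hb : 0 ≤ b) :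
    RCLike.re ((a - b) * (a - b)).trace ≤ RCLike.re (CFC.abs (a * a - b * b)).trace := by
  set S := a - b with hS_def
  have hS : IsSelfAdjoint S := ha.isSelfAdjoint.sub hb.isSelfAdjoint
  obtain ⟨G, hG, hGS_comm, hGS⟩ := exists_mul_eq_abs hS
  have hsym : RCLike.re (G * (a * a - b * b)).trace = RCLike.re (G * S * (a + b)).trace := by
    have hST : S * (a + b) + (a + b) * S = (a * a - b * b) + (a * a - b * b) := by
      rw [hS_def]; noncomm_ring
    have h2 : (G * (S * (a + b) + (a + b) * S)).trace
        = (G * S * (a + b)).trace + (G * S * (a + b)).trace := by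
      rw [Matrix.mul_add, trace_add, ← Matrix.mul_assoc, ← Matrix.mul_assoc,
        trace_mul_cycle G (a + b) S, hGS_comm.eq]
    rw [hST, Matrix.mul_add, trace_add] at h2
    have := congrArg RCLike.re h2
    simp only [map_add] at this
    linarith
  have hsplit : G * S * (a + b) = S⁺ * S - S⁻ * S + (S⁺ * b + S⁺ * b) + (S⁻ * a + S⁻ * a) := by
    rw [hGS, ← CFC.posPart_add_negPart S hS, hS_def]; noncomm_ring
  calc RCLike.re (S * S).trace
      = RCLike.re (S⁺ * S).trace - RCLike.re (S⁻ * S).trace := by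
        nth_rw 1 [← CFC.posPart_sub_negPart S hS]; rw [Matrix.sub_mul, trace_sub, map_sub]
    _ ≤ RCLike.re (S⁺ * S).trace - RCLike.re (S⁻ * S).trace
          + (RCLike.re (S⁺ * b).trace + RCLike.re (S⁺ * b).trace)
          + (RCLike.re (S⁻ * a).trace + RCLike.re (S⁻ * a).trace) := by
        have := re_trace_mul_nonneg (CFC.posPart_nonneg S) hb
        have := re_trace_mul_nonneg (CFC.negPart_nonneg S) ha
        linarith
    _ = RCLike.re (G * (a * a - b * b)).trace := by
        rw [hsym, hsplit]
        simp only [trace_add, trace_sub, map_add, map_sub]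
    _ ≤ RCLike.re (CFC.abs (a * a - b * b)).trace := re_trace_mul_le_re_trace_abs hG _

lemma exists_nonneg_le_one_mul_eq_posPart {Δ : Matrix n n 𝕜} (hΔ : IsSelfAdjoint Δ) :
    ∃ P : Matrix n n 𝕜, 0 ≤ P ∧ P ≤ 1 ∧ P * Δ = Δ⁺ := by
  refine ⟨cfc (fun x : ℝ => if 0 < x then 1 else 0) Δ, cfc_nonneg fun x _ => ?_,
    cfc_le_one _ _ fun x _ => ?_, ?_⟩
  · split_ifs <;> norm_num
  · split_ifs <;> norm_num
  · rw [cfc_mul_self hΔ, CFC.posPart_def, cfcₙ_eq_cfc]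
    refine cfc_congr fun x _ => ?_
    rcases lt_or_ge 0 x with hx | hx
    · simp [hx, hx.le]
    · simp [not_lt.mpr hx, hx]

end Matrix

lemma sqrt_mul_sqrt_add_sqrt_mul_sqrt_le {p q : ℝ} (hp₀ : 0 ≤ p) (hp₁ : p ≤ 1) (hq₀ : 0 ≤ q)
    (hq₁ : q ≤ 1) : √p * √q + √(1 - p) * √(1 - q) ≤ √(1 - (p - q) ^ 2) := by
  apply Real.le_sqrt_of_sq_le
  set a := √p
  set b := √q
  set c := √(1 - p)
  set d := √(1 - q)
  have ha : a ^ 2 = p := Real.sq_sqrt hp₀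
  have hb : b ^ 2 = q := Real.sq_sqrt hq₀
  have hac : a ^ 2 + c ^ 2 = 1 := by rw [ha, Real.sq_sqrt (sub_nonneg.mpr hp₁)]; ring
  have hbd : b ^ 2 + d ^ 2 = 1 := by rw [hb, Real.sq_sqrt (sub_nonneg.mpr hq₁)]; ring
  have h₁ : (a * b + c * d) ^ 2 + (a * d - b * c) ^ 2 = 1 := by
    linear_combination (b ^ 2 + d ^ 2) * hac + hbd
  have h₂ : (a * d + b * c) ^ 2 + (a * b - c * d) ^ 2 = 1 := by
    linear_combination (b ^ 2 + d ^ 2) * hac + hbd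
  have h₃ : a ^ 2 - b ^ 2 = (a * d - b * c) * (a * d + b * c) := by
    linear_combination (-a ^ 2) * hbd + b ^ 2 * hac
  have key : 1 - (a ^ 2 - b ^ 2) ^ 2 - (a * b + c * d) ^ 2
      = ((a * d - b * c) * (a * b - c * d)) ^ 2 := by
    linear_combination (-1) * h₁ - (a * d - b * c) ^ 2 * h₂
      - (a ^ 2 - b ^ 2 + (a * d - b * c) * (a * d + b * c)) * h₃
  rw [← ha, ← hb]
  linarith [sq_nonneg ((a * d - b * c) * (a * b - c * d))]

section

variable {n : Type} [Fintype n] [DecidableEq n]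

open Matrix

lemma sqrtM_eq_sqrt {A : Matrix n n ℂ} (hA : 0 ≤ A) : sqrtM A = CFC.sqrt A := by
  have hA' := nonneg_iff_posSemidef.mp hA
  rw [sqrtM, dif_pos hA', CFC.sqrt_eq_cfc, cfc_nnreal_eq_real _ A hA, hA'.1.cfc_eq,
    IsHermitian.cfc, Unitary.conjStarAlgAut_apply]
  congr 3
  funext i
  simp [hA'.eigenvalues_nonneg i]

lemma traceNorm_eq_re_trace_abs (X : Matrix n n ℂ) :
    traceNorm X = RCLike.re (CFC.abs X).trace := by
  rw [traceNorm, sqrtM_eq_sqrt (posSemidef_conjTranspose_mul_self X).nonneg]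
  rfl

lemma fidelity_eq_traceNorm {ρ ξ : Matrix n n ℂ} (hρ : 0 ≤ ρ) (hξ : 0 ≤ ξ) :
    fidelity ρ ξ = traceNorm (CFC.sqrt ξ * CFC.sqrt ρ) := by
  have h : CFC.sqrt ρ * ξ * CFC.sqrt ρ
      = (CFC.sqrt ξ * CFC.sqrt ρ)ᴴ * (CFC.sqrt ξ * CFC.sqrt ρ) := by
    simp only [conjTranspose_mul, conjTranspose_sqrt, Matrix.mul_assoc]
    rw [← Matrix.mul_assoc (CFC.sqrt ξ), CFC.sqrt_mul_sqrt_self ξ hξ]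
  rw [fidelity, traceNorm, sqrtM_eq_sqrt hρ, h]

lemma fidelity_le_of_nonneg_of_le_one {ρ ξ P : Matrix n n ℂ} (hρ : 0 ≤ ρ) (hξ : 0 ≤ ξ)
    (hP₀ : 0 ≤ P) (hP₁ : P ≤ 1) :
    fidelity ρ ξ ≤ √(RCLike.re (P * ρ).trace) * √(RCLike.re (P * ξ).trace)
      + √(RCLike.re ((1 - P) * ρ).trace) * √(RCLike.re ((1 - P) * ξ).trace) := by
  set N := polarFactor (CFC.sqrt ξ * CFC.sqrt ρ)
  have hN : N * Nᴴ ≤ 1 := polarFactor_mul_conjTranspose_self_le_one _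
  have hsplit : Nᴴ * (CFC.sqrt ξ * CFC.sqrt ρ)
      = Nᴴ * CFC.sqrt ξ * P * CFC.sqrt ρ + Nᴴ * CFC.sqrt ξ * (1 - P) * CFC.sqrt ρ := by
    noncomm_ring
  rw [fidelity_eq_traceNorm hρ hξ, traceNorm_eq_re_trace_abs, ← conjTranspose_polarFactor_mul,
    hsplit, trace_add, map_add]
  exact add_le_add (re_trace_conjTranspose_mul_sqrt_mul_mul_sqrt_le hN hP₀ hρ hξ)
    (re_trace_conjTranspose_mul_sqrt_mul_mul_sqrt_le hN (sub_nonneg.mpr hP₁) hρ hξ)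

lemma one_sub_half_traceNorm_le_fidelity {ρ ξ : Matrix n n ℂ} (hρ : 0 ≤ ρ) (hρtr : ρ.trace = 1)
    (hξ : 0 ≤ ξ) (hξtr : ξ.trace = 1) :
    1 - 1 / 2 * traceNorm (ρ - ξ) ≤ fidelity ρ ξ := by
  set a := CFC.sqrt ρ
  set b := CFC.sqrt ξ
  have hPS : RCLike.re ((a - b) * (a - b)).trace ≤ traceNorm (ρ - ξ) := by
    rw [traceNorm_eq_re_trace_abs, ← CFC.sqrt_mul_sqrt_self ρ hρ, ← CFC.sqrt_mul_sqrt_self ξ hξ]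
    exact re_trace_sub_mul_sub_le_re_trace_abs (CFC.sqrt_nonneg ρ) (CFC.sqrt_nonneg ξ)
  have hexpand : RCLike.re ((a - b) * (a - b)).trace = 2 - 2 * RCLike.re (b * a).trace := by
    have : (a - b) * (a - b) = a * a + b * b - a * b - b * a := by noncomm_ring
    rw [this, CFC.sqrt_mul_sqrt_self ρ hρ, CFC.sqrt_mul_sqrt_self ξ hξ, trace_sub, trace_sub,
      trace_add, trace_mul_comm a b, hρtr, hξtr]
    simp only [map_sub, map_add, RCLike.one_re]
    ring
  have hF : RCLike.re (b * a).trace ≤ fidelity ρ ξ := by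
    rw [fidelity_eq_traceNorm hρ hξ, traceNorm_eq_re_trace_abs]
    simpa using re_trace_mul_le_re_trace_abs (G := 1) (by simp) (b * a)
  linarith

lemma fidelity_le_sqrt_one_sub_traceNorm_sq {ρ ξ : Matrix n n ℂ} (hρ : 0 ≤ ρ)
    (hρtr : ρ.trace = 1) (hξ : 0 ≤ ξ) (hξtr : ξ.trace = 1) :
    fidelity ρ ξ ≤ √(1 - 1 / 4 * traceNorm (ρ - ξ) ^ 2) := by
  obtain ⟨P, hP₀, hP₁, hPΔ⟩ :=
    exists_nonneg_le_one_mul_eq_posPart (hρ.isSelfAdjoint.sub hξ.isSelfAdjoint)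
  have hcompl : ∀ {σ : Matrix n n ℂ}, σ.trace = 1 →
      RCLike.re ((1 - P) * σ).trace = 1 - RCLike.re (P * σ).trace := fun hσ => by
    rw [Matrix.sub_mul, Matrix.one_mul, trace_sub, hσ, map_sub, RCLike.one_re]
  have htn : traceNorm (ρ - ξ) = 2 * (RCLike.re (P * ρ).trace - RCLike.re (P * ξ).trace) := by
    rw [traceNorm_eq_re_trace_abs, ← sub_eq_of_eq_add (CFC.abs_add_self _).symm, ← hPΔ,
      two_nsmul]
    simp only [Matrix.mul_sub, trace_sub, trace_add, hρtr, hξtr, map_sub, map_add]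
    ring
  have hle : ∀ {σ : Matrix n n ℂ}, 0 ≤ σ → σ.trace = 1 →
      0 ≤ RCLike.re (P * σ).trace ∧ RCLike.re (P * σ).trace ≤ 1 := fun hσ hσtr =>
    ⟨re_trace_mul_nonneg hP₀ hσ,
      sub_nonneg.mp ((hcompl hσtr).symm ▸ re_trace_mul_nonneg (sub_nonneg.mpr hP₁) hσ)⟩
  calc fidelity ρ ξ
      ≤ √(RCLike.re (P * ρ).trace) * √(RCLike.re (P * ξ).trace)
        + √(1 - RCLike.re (P * ρ).trace) * √(1 - RCLike.re (P * ξ).trace) := by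
        rw [← hcompl hρtr, ← hcompl hξtr]
        exact fidelity_le_of_nonneg_of_le_one hρ hξ hP₀ hP₁
    _ ≤ √(1 - (RCLike.re (P * ρ).trace - RCLike.re (P * ξ).trace) ^ 2) :=
        sqrt_mul_sqrt_add_sqrt_mul_sqrt_le (hle hρ hρtr).1 (hle hρ hρtr).2 (hle hξ hξtr).1
          (hle hξ hξtr).2
    _ = √(1 - 1 / 4 * traceNorm (ρ - ξ) ^ 2) := by rw [htn]; ring_nf

end

/-- Fuchs-van de Graaf inequalities: for density matrices the fidelity satisfies
1 - (1/2)‖ρ - ξ‖_tr ≤ F(ρ, ξ) ≤ √(1 - (1/4)‖ρ - ξ‖_tr²). -/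
theorem fidelity_traceNorm_bounds {n : ℕ} (ρ ξ : Matrix (Fin n) (Fin n) Complex)
    (hρ : ρ.PosSemidef) (hρtr : ρ.trace = 1) (hξ : ξ.PosSemidef) (hξtr : ξ.trace = 1) :
    1 - (1 / 2) * traceNorm (ρ - ξ) ≤ fidelity ρ ξ ∧
      fidelity ρ ξ ≤ Real.sqrt (1 - (1 / 4) * traceNorm (ρ - ξ) ^ 2) :=
  ⟨one_sub_half_traceNorm_le_fidelity hρ.nonneg hρtr hξ.nonneg hξtr,
    fidelity_le_sqrt_one_sub_traceNorm_sq hρ.nonneg hρtr hξ.nonneg hξtr⟩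
end

section
/- For density matrices ρ, ξ on H ⊗ K with purifications |ψ⟩, |φ⟩, one has ‖tr_H(|ψ⟩⟨φ|)‖_tr = max over unitaries U on K of |⟨φ|(I_H ⊗ U)|ψ⟩| (this maximum equals the fidelity by Uhlmann's theorem). -/
open scoped ComplexOrder Matrix

/-! Writing `M = A D V*` (singular value decomposition), `tr (U M) = tr ((V* U A) D)` is a
`D`-weighted sum of diagonal entries of a unitary, each of modulus at most one, so
`‖tr (U M)‖ ≤ tr D = ‖M‖_tr`, with equality for `U = V A*`. The overlap
`⟨φ|(I ⊗ U)|ψ⟩` is `tr (U tr_H |ψ⟩⟨φ|)`. -/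

open Matrix

section SingularValues

variable {ι : Type} [Fintype ι] [DecidableEq ι]

/-- The columns of `N` are orthogonal with norms `|d j|`; normalizing the nonzero ones and
extending to an orthonormal basis gives the columns of `A`. -/
lemma Matrix.exists_unitary_mul_diagonal_of_conjTranspose_mul_self_eq_diagonal
    {N : Matrix ι ι ℂ} {d : ι → ℝ} (hN : Nᴴ * N = diagonal fun j => ((d j ^ 2 : ℝ) : ℂ)) :
    ∃ A ∈ unitaryGroup ι ℂ, N = A * diagonal fun j => (d j : ℂ) := by
  have hcol : ∀ i j, (fun k => N k j) ⬝ᵥ star (fun k => N k i) =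
      if i = j then ((d i ^ 2 : ℝ) : ℂ) else 0 := by
    intro i j
    have h := congrFun (congrFun hN i) j
    rw [mul_apply, diagonal_apply] at h
    rw [← h, dotProduct]
    exact Finset.sum_congr rfl fun k _ => mul_comm _ _
  let u : ι → EuclideanSpace ℂ ι := fun j => WithLp.toLp 2 ((d j : ℂ)⁻¹ • fun k => N k j)
  have hu : Orthonormal ℂ ({j | d j ≠ 0}.domRestrict u) := by
    rw [orthonormal_iff_ite]
    rintro ⟨i, hi⟩ ⟨j, hj⟩
    simp only [Set.domRestrict_apply, u, EuclideanSpace.inner_toLp_toLp, star_smul,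
      smul_dotProduct, dotProduct_smul, hcol, Subtype.mk.injEq]
    split_ifs with hij
    · subst hij
      simp only [ne_eq, Set.mem_ofPred_eq] at hi
      simp only [star_inv₀, RCLike.star_def, Complex.conj_ofReal, Complex.ofReal_pow,
        smul_eq_mul]
      field_simp
    · simp
  obtain ⟨b, hb⟩ := hu.exists_orthonormalBasis_extension_of_card_eq finrank_euclideanSpace
  refine ⟨(EuclideanSpace.basisFun ι ℂ).toBasis.toMatrix b.toBasis,
    (EuclideanSpace.basisFun ι ℂ).toMatrix_orthonormalBasis_mem_unitary b, ?_⟩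
  ext i j
  rw [mul_diagonal, Module.Basis.toMatrix_apply]
  by_cases hj : d j = 0
  · have hcol_zero : (fun k => N k j) = 0 := by
      rw [← dotProduct_star_self_eq_zero, dotProduct_comm, hcol, if_pos rfl, hj]
      simp
    simpa [hj] using congrFun hcol_zero i
  · rw [OrthonormalBasis.coe_toBasis, hb j hj]
    simp only [u, WithLp.toLp_smul, map_smul, Finsupp.coe_smul, Pi.smul_apply,
      OrthonormalBasis.coe_toBasis_repr_apply, EuclideanSpace.basisFun_repr, smul_eq_mul]
    field_simp

lemma sqrtM_of_posSemidef {A : Matrix ι ι ℂ} (hA : A.PosSemidef) :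
    sqrtM A = (hA.1.eigenvectorUnitary : Matrix ι ι ℂ) *
      diagonal (fun j => (√(hA.1.eigenvalues j) : ℂ)) *
      star (hA.1.eigenvectorUnitary : Matrix ι ι ℂ) :=
  dif_pos hA

noncomputable def Matrix.singularValues (M : Matrix ι ι ℂ) (j : ι) : ℝ :=
  √((posSemidef_conjTranspose_mul_self M).1.eigenvalues j)

lemma Matrix.singularValues_nonneg (M : Matrix ι ι ℂ) (j : ι) : 0 ≤ M.singularValues j :=
  Real.sqrt_nonneg _

lemma traceNorm_eq_sum_singularValues (M : Matrix ι ι ℂ) :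
    traceNorm M = ∑ j, M.singularValues j := by
  rw [traceNorm, sqrtM_of_posSemidef (posSemidef_conjTranspose_mul_self M), trace_mul_cycle,
    Unitary.coe_star_mul_self, one_mul, trace_diagonal, Complex.re_sum]
  simp only [Complex.ofReal_re, singularValues]

lemma Matrix.exists_svd (M : Matrix ι ι ℂ) :
    ∃ A ∈ unitaryGroup ι ℂ, ∃ V ∈ unitaryGroup ι ℂ,
      M = A * diagonal (fun j => (M.singularValues j : ℂ)) * star V := by
  set hH := posSemidef_conjTranspose_mul_self M
  set V : Matrix ι ι ℂ := ↑hH.1.eigenvectorUnitary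
  have hgram : (M * V)ᴴ * (M * V) = diagonal fun j => ((M.singularValues j ^ 2 : ℝ) : ℂ) := by
    have hdiag : star V * (Mᴴ * M) * V = diagonal fun j => (hH.1.eigenvalues j : ℂ) :=
      (Unitary.conjStarAlgAut_star_apply _ _).symm.trans
        hH.1.conjStarAlgAut_star_eigenvectorUnitary
    simp only [singularValues, Real.sq_sqrt (hH.eigenvalues_nonneg _), ← hdiag,
      conjTranspose_mul, star_eq_conjTranspose, mul_assoc]
  obtain ⟨A, hA, hMV⟩ :=
    exists_unitary_mul_diagonal_of_conjTranspose_mul_self_eq_diagonal hgram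
  refine ⟨A, hA, V, hH.1.eigenvectorUnitary.2, ?_⟩
  rw [← hMV, mul_assoc, Unitary.mul_star_self_of_mem hH.1.eigenvectorUnitary.2, mul_one]

lemma norm_trace_mul_diagonal_le {W : Matrix ι ι ℂ} (hW : W ∈ unitaryGroup ι ℂ) {s : ι → ℝ}
    (hs : ∀ j, 0 ≤ s j) : ‖(W * diagonal fun j => (s j : ℂ)).trace‖ ≤ ∑ j, s j := by
  calc ‖(W * diagonal fun j => (s j : ℂ)).trace‖ = ‖∑ j, W j j * s j‖ := by
        simp only [trace, diag_apply, mul_diagonal]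
    _ ≤ ∑ j, ‖W j j‖ * s j := by
        refine (norm_sum_le _ _).trans_eq (Finset.sum_congr rfl fun j _ => ?_)
        rw [norm_mul, Complex.norm_real, Real.norm_of_nonneg (hs j)]
    _ ≤ ∑ j, s j := Finset.sum_le_sum fun j _ =>
        mul_le_of_le_one_left (hs j) (entry_norm_bound_of_unitary hW j j)

lemma isGreatest_norm_trace_unitary_mul (M : Matrix ι ι ℂ) :
    IsGreatest {t : ℝ | ∃ U ∈ unitaryGroup ι ℂ, t = ‖(U * M).trace‖} (traceNorm M) := by
  obtain ⟨A, hA, V, hV, hM⟩ := M.exists_svd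
  set D := diagonal fun j => (M.singularValues j : ℂ)
  have htrace : ∀ U, (U * M).trace = (star V * U * A * D).trace := by
    intro U
    rw [hM, ← mul_assoc, ← mul_assoc, trace_mul_cycle]
    simp only [mul_assoc]
  have hcancel : star V * (V * star A) * A = 1 := by
    rw [← mul_assoc, Unitary.star_mul_self_of_mem hV, one_mul, Unitary.star_mul_self_of_mem hA]
  rw [traceNorm_eq_sum_singularValues]
  refine ⟨⟨V * star A, mul_mem hV (Unitary.star_mem hA), ?_⟩, ?_⟩
  · rw [htrace, hcancel, one_mul, trace_diagonal, ← Complex.ofReal_sum, Complex.norm_real,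
      Real.norm_of_nonneg (Finset.sum_nonneg fun j _ => M.singularValues_nonneg j)]
  · rintro t ⟨U, hU, rfl⟩
    rw [htrace]
    exact norm_trace_mul_diagonal_le (mul_mem (mul_mem (Unitary.star_mem hV) hU) hA)
      M.singularValues_nonneg

end SingularValues

lemma trace_mul_ptraceFst_outer {α β : Type} [Fintype α] [Fintype β] (ψ φ : α × β → ℂ)
    (U : Matrix β β ℂ) :
    (U * ptraceFst (outer ψ φ)).trace =
      ∑ s : α × β, star (φ s) * ∑ j, U s.2 j * ψ (s.1, j) := by
  simp only [trace, diag_apply, mul_apply, ptraceFst, outer, of_apply, Finset.mul_sum,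
    Fintype.sum_prod_type_right]
  refine Finset.sum_congr rfl fun b _ => Finset.sum_comm.trans <|
    Finset.sum_congr rfl fun a _ => Finset.sum_congr rfl fun j _ => by ring

theorem traceNorm_ptrace_outer_eq_max_overlap_general {n m : ℕ} (ψ φ : Fin n × Fin m → Complex) :
    IsGreatest {t : Real | ∃ U ∈ Matrix.unitaryGroup (Fin m) Complex,
        t = ‖∑ s : Fin n × Fin m, star (φ s) * ∑ j : Fin m, U s.2 j * ψ (s.1, j)‖}
      (traceNorm (ptraceFst (outer ψ φ))) := by
  simpa only [trace_mul_ptraceFst_outer] using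
    isGreatest_norm_trace_unitary_mul (ptraceFst (outer ψ φ))

/-- The trace norm of the partial trace over H of |ψ⟩⟨φ| equals the maximum over
unitaries U on K of |⟨φ|(I ⊗ U)|ψ⟩|. -/
theorem traceNorm_ptrace_outer_eq_max_overlap {n m : ℕ} (ρ ξ : Matrix (Fin n) (Fin n) Complex)
    (hρ : ρ.PosSemidef) (hρtr : ρ.trace = 1) (hξ : ξ.PosSemidef) (hξtr : ξ.trace = 1)
    (ψ φ : Fin n × Fin m → Complex)
    (hψ : ptraceSnd (outer ψ ψ) = ρ) (hφ : ptraceSnd (outer φ φ) = ξ) :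
    IsGreatest {t : Real | ∃ U ∈ Matrix.unitaryGroup (Fin m) Complex,
        t = ‖∑ s : Fin n × Fin m, star (φ s) * ∑ j : Fin m, U s.2 j * ψ (s.1, j)‖}
      (traceNorm (ptraceFst (outer ψ φ))) :=
  traceNorm_ptrace_outer_eq_max_overlap_general ψ φ
end

section
/- Let D be the single-qubit decoherence channel D(σ) = |0⟩⟨0|σ|0⟩⟨0| + |1⟩⟨1|σ|1⟩⟨1|. For any unit vectors |φ₀⟩, |φ₁⟩ ∈ K ⊗ F and |φ⟩ = √p|0⟩|φ₀⟩ + √(1−p)|1⟩|φ₁⟩ with p ∈ [0,1], define R₀(ρ) = tr_K(ρ) and R₁(ρ) = (D ⊗ I)(tr_K(ρ)) acting on states of the qubit together with K ⊗ F, where the qubit is not traced out. Then ‖R₀(|φ⟩⟨φ|) − R₁(|φ⟩⟨φ|)‖_tr = 2√(p(1−p)) · ‖tr_K(|φ₀⟩⟨φ₁|)‖_tr. -/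
open scoped ComplexOrder Matrix

/-- Partial trace over the middle tensor factor. -/
noncomputable def ptraceMid {α β γ : Type} [Fintype β]
    (X : Matrix (α × β × γ) (α × β × γ) Complex) : Matrix (α × γ) (α × γ) Complex :=
  Matrix.of fun s t => ∑ b : β, X (s.1, b, s.2) (t.1, b, t.2)

/-- The decoherence channel D on the first (qubit) factor, tensored with the identity:
off-diagonal blocks in the qubit index are set to zero. -/
noncomputable def decohereFst {γ : Type}
    (Y : Matrix (Fin 2 × γ) (Fin 2 × γ) Complex) : Matrix (Fin 2 × γ) (Fin 2 × γ) Complex :=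
  Matrix.of fun s t => if s.1 = t.1 then Y s t else 0

/-!
The difference `R₀(|φ⟩⟨φ|) - R₁(|φ⟩⟨φ|)` consists of the off-diagonal qubit blocks of
`tr_K |φ⟩⟨φ|`, namely `c • A` and its adjoint, where `A = tr_K |φ₀⟩⟨φ₁|` and `c = √p √(1-p)`.
This Hermitian block matrix squares to the block diagonal matrix with blocks `c² A Aᴴ` and
`c² Aᴴ A`, so its trace norm is `c (tr √(A Aᴴ) + tr √(Aᴴ A)) = 2 c ‖A‖_tr`. The last equality
holds because `√` agrees with a single polynomial on both spectra, while
`tr (A Aᴴ)ᵏ = tr (Aᴴ A)ᵏ` for every `k`.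
-/

open Matrix Polynomial
open scoped MatrixOrder

section SqrtM

variable {n : Type} [Fintype n] [DecidableEq n] {N : Matrix n n ℂ}

theorem sqrtM_eq_cfcSqrt (hN : N.PosSemidef) : sqrtM N = CFC.sqrt N := by
  rw [sqrtM, dif_pos hN, CFC.sqrt_eq_real_sqrt N hN.nonneg, cfcₙ_eq_cfc, hN.1.cfc_eq,
    IsHermitian.cfc, Unitary.conjStarAlgAut_apply]
  rfl

theorem posSemidef_sqrtM (hN : N.PosSemidef) : (sqrtM N).PosSemidef := by
  rw [sqrtM_eq_cfcSqrt hN]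
  exact (CFC.sqrt_nonneg N).posSemidef

theorem sqrtM_mul_self (hN : N.PosSemidef) : sqrtM N * sqrtM N = N := by
  rw [sqrtM_eq_cfcSqrt hN]
  exact CFC.sqrt_mul_sqrt_self N hN.nonneg

theorem sqrtM_eq_of_mul_self {B : Matrix n n ℂ} (hB : B.PosSemidef) (h : B * B = N) :
    sqrtM N = B := by
  subst h
  rw [sqrtM_eq_cfcSqrt (IsSelfAdjoint.mul_self_nonneg hB.1).posSemidef]
  exact CFC.sqrt_mul_self B hB.nonneg

theorem sqrtM_eq_aeval {g : ℝ[X]} (hN : N.PosSemidef)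
    (hg : ∀ x ∈ spectrum ℝ N, g.eval x = √x) : sqrtM N = aeval N g := by
  rw [sqrtM_eq_cfcSqrt hN, CFC.sqrt_eq_real_sqrt N hN.nonneg, cfcₙ_eq_cfc,
    ← cfc_polynomial g N hN.1.isSelfAdjoint]
  exact cfc_congr fun x hx => (hg x hx).symm

theorem trace_pow_mul_comm {R : Type*} [CommSemiring R] (A B : Matrix n n R) (k : ℕ) :
    trace ((A * B) ^ k) = trace ((B * A) ^ k) := by
  cases k with
  | zero => rfl
  | succ k =>
    have hsemiconj : A * (B * A) ^ k = (A * B) ^ k * A :=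
      SemiconjBy.pow_right (mul_assoc A B A).symm k
    rw [pow_succ, ← mul_assoc, ← hsemiconj, mul_assoc, trace_mul_comm, mul_assoc, ← pow_succ]

theorem trace_aeval_mul_comm {R S : Type*} [CommSemiring R] [CommSemiring S] [Algebra R S]
    (A B : Matrix n n S) (g : R[X]) :
    trace (aeval (A * B) g) = trace (aeval (B * A) g) := by
  simp only [aeval_eq_sum_range, trace_sum, trace_smul, trace_pow_mul_comm]

theorem trace_sqrtM_mul_conjTranspose (A : Matrix n n ℂ) :
    trace (sqrtM (A * Aᴴ)) = trace (sqrtM (Aᴴ * A)) := by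
  have hAAH := posSemidef_self_mul_conjTranspose A
  have hAHA := posSemidef_conjTranspose_mul_self A
  have hfin : (spectrum ℝ (A * Aᴴ) ∪ spectrum ℝ (Aᴴ * A)).Finite :=
    (A * Aᴴ).finite_real_spectrum.union (Aᴴ * A).finite_real_spectrum
  set s := hfin.toFinset
  obtain ⟨g, hg⟩ : ∃ g : ℝ[X], ∀ x ∈ s, g.eval x = √x :=
    ⟨Lagrange.interpolate s id Real.sqrt,
      fun x hx => Lagrange.eval_interpolate_at_node _ (Set.injOn_id _) hx⟩
  rw [sqrtM_eq_aeval hAAH fun x hx => hg x (by simp [s, hx]),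
    sqrtM_eq_aeval hAHA fun x hx => hg x (by simp [s, hx]), trace_aeval_mul_comm]

theorem traceNorm_smul (c : ℂ) (X : Matrix n n ℂ) : traceNorm (c • X) = ‖c‖ * traceNorm X := by
  have hXHX := posSemidef_conjTranspose_mul_self X
  have hsqrt : sqrtM ((c • X)ᴴ * (c • X)) = ‖c‖ • sqrtM (Xᴴ * X) := by
    refine sqrtM_eq_of_mul_self ((posSemidef_sqrtM hXHX).smul (norm_nonneg c)) ?_
    rw [smul_mul_smul, sqrtM_mul_self hXHX, conjTranspose_smul, smul_mul_smul, Complex.star_def,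
      Complex.conj_mul', ← pow_two, ← Complex.ofReal_pow, Complex.coe_smul]
  rw [traceNorm, traceNorm, hsqrt, trace_smul, Complex.smul_re, smul_eq_mul]

end SqrtM

namespace Matrix

theorem trace_comp {I J R : Type*} [Fintype I] [Fintype J] [AddCommMonoid R]
    (M : Matrix I I (Matrix J J R)) : trace (comp I I J J R M) = trace (trace M) := by
  simp only [trace, diag, comp_apply, Fintype.sum_prod_type, Matrix.sum_apply]
  exact Finset.sum_comm

theorem comp_fin_two_mul_comp_fin_two {J R : Type*} [Fintype J] [NonUnitalNonAssocSemiring R]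
    (A B C D A' B' C' D' : Matrix J J R) :
    comp _ _ _ _ R !![A, B; C, D] * comp _ _ _ _ R !![A', B'; C', D'] =
      comp _ _ _ _ R !![A * A' + B * C', A * B' + B * D'; C * A' + D * C', C * B' + D * D'] := by
  rw [← compRingEquiv_apply, ← compRingEquiv_apply, ← map_mul, mul_fin_two]
  rfl

theorem conjTranspose_comp_fin_two {J R : Type*} [Star R] (A B C D : Matrix J J R) :
    (comp _ _ _ _ R !![A, B; C, D])ᴴ = comp _ _ _ _ R !![Aᴴ, Cᴴ; Bᴴ, Dᴴ] := by
  rw [conjTranspose_comp]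
  congr 1
  ext i j
  fin_cases i <;> fin_cases j <;> rfl

theorem posSemidef_comp_fin_two_diag {γ : Type} [Fintype γ] [DecidableEq γ] {P Q : Matrix γ γ ℂ}
    (hP : P.PosSemidef) (hQ : Q.PosSemidef) :
    (comp _ _ _ _ ℂ !![P, 0; 0, Q]).PosSemidef := by
  obtain ⟨S, rfl⟩ := CStarAlgebra.nonneg_iff_eq_star_mul_self.mp hP.nonneg
  obtain ⟨T, rfl⟩ := CStarAlgebra.nonneg_iff_eq_star_mul_self.mp hQ.nonneg
  convert posSemidef_conjTranspose_mul_self (comp _ _ _ _ ℂ !![S, 0; 0, T]) using 1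
  rw [conjTranspose_comp_fin_two, comp_fin_two_mul_comp_fin_two]
  simp [star_eq_conjTranspose]

end Matrix

theorem traceNorm_comp_fin_two_offDiag {γ : Type} [Fintype γ] [DecidableEq γ] (B : Matrix γ γ ℂ) :
    traceNorm (comp _ _ _ _ ℂ !![0, B; Bᴴ, 0]) = 2 * traceNorm B := by
  have hBBH := posSemidef_self_mul_conjTranspose B
  have hBHB := posSemidef_conjTranspose_mul_self B
  have hsq : (comp _ _ _ _ ℂ !![0, B; Bᴴ, 0])ᴴ * comp _ _ _ _ ℂ !![0, B; Bᴴ, 0] =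
      comp _ _ _ _ ℂ !![B * Bᴴ, 0; 0, Bᴴ * B] := by
    rw [conjTranspose_comp_fin_two, comp_fin_two_mul_comp_fin_two]
    simp
  have hsqrt : sqrtM (comp _ _ _ _ ℂ !![B * Bᴴ, 0; 0, Bᴴ * B]) =
      comp _ _ _ _ ℂ !![sqrtM (B * Bᴴ), 0; 0, sqrtM (Bᴴ * B)] := by
    refine sqrtM_eq_of_mul_self
      (posSemidef_comp_fin_two_diag (posSemidef_sqrtM hBBH) (posSemidef_sqrtM hBHB)) ?_
    rw [comp_fin_two_mul_comp_fin_two]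
    simp [sqrtM_mul_self hBBH, sqrtM_mul_self hBHB]
  rw [traceNorm, hsq, hsqrt, trace_comp, trace_fin_two_of, trace_add,
    trace_sqrtM_mul_conjTranspose, Complex.add_re, ← traceNorm, two_mul]

section Decoherence

variable {α γ : Type} [Fintype α]

theorem ptraceFst_outer_smul (u v : ℂ) (ψ χ : α × γ → ℂ) :
    ptraceFst (outer (u • ψ) (v • χ)) = (u * star v) • ptraceFst (outer ψ χ) := by
  ext x y
  simp only [ptraceFst, outer, of_apply, Matrix.smul_apply, Pi.smul_apply, smul_eq_mul,
    Finset.mul_sum, star_mul']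
  exact Finset.sum_congr rfl fun _ _ => by ring

theorem ptraceMid_outer_sub_decohereFst (φ : Fin 2 × α × γ → ℂ) :
    ptraceMid (outer φ φ) - decohereFst (ptraceMid (outer φ φ)) =
      comp _ _ _ _ ℂ !![0, ptraceFst (outer (fun x => φ (0, x)) (fun x => φ (1, x)));
        (ptraceFst (outer (fun x => φ (0, x)) (fun x => φ (1, x))))ᴴ, 0] := by
  ext ⟨i, x⟩ ⟨j, y⟩
  fin_cases i <;> fin_cases j <;>
    simp [ptraceMid, decohereFst, ptraceFst, outer, conjTranspose_apply, mul_comm]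

end Decoherence

theorem decoherence_difference_traceNorm_general {a b : ℕ}
    (φ₀ φ₁ : Fin a × Fin b → Complex)
    (p : Real) (hp : p ∈ Set.Icc (0 : Real) 1)
    (φ : Fin 2 × (Fin a × Fin b) → Complex)
    (hφ : φ = fun s => if s.1 = 0 then (Real.sqrt p : Complex) * φ₀ s.2
      else (Real.sqrt (1 - p) : Complex) * φ₁ s.2) :
    traceNorm (ptraceMid (outer φ φ) - decohereFst (ptraceMid (outer φ φ))) =
      2 * Real.sqrt (p * (1 - p)) * traceNorm (ptraceFst (outer φ₀ φ₁)) := by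
  have hφ₀ : (fun x => φ (0, x)) = (√p : ℂ) • φ₀ := by subst hφ; rfl
  have hφ₁ : (fun x => φ (1, x)) = (√(1 - p) : ℂ) • φ₁ := by subst hφ; rfl
  rw [ptraceMid_outer_sub_decohereFst, hφ₀, hφ₁, ptraceFst_outer_smul,
    traceNorm_comp_fin_two_offDiag, traceNorm_smul, norm_mul, norm_star,
    Complex.norm_of_nonneg (Real.sqrt_nonneg p), Complex.norm_of_nonneg (Real.sqrt_nonneg (1 - p)),
    Real.sqrt_mul hp.1]
  ring

/-- The difference between tracing out K and additionally decohering the control qubit,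
applied to |φ⟩⟨φ| for φ = √p|0⟩|φ₀⟩ + √(1-p)|1⟩|φ₁⟩, has trace norm
2√(p(1-p))·‖tr_K|φ₀⟩⟨φ₁|‖_tr. -/
theorem decoherence_difference_traceNorm {a b : ℕ}
    (φ₀ φ₁ : Fin a × Fin b → Complex)
    (h₀ : ∑ x, Complex.normSq (φ₀ x) = 1) (h₁ : ∑ x, Complex.normSq (φ₁ x) = 1)
    (p : Real) (hp : p ∈ Set.Icc (0 : Real) 1)
    (φ : Fin 2 × (Fin a × Fin b) → Complex)
    (hφ : φ = fun s => if s.1 = 0 then (Real.sqrt p : Complex) * φ₀ s.2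
      else (Real.sqrt (1 - p) : Complex) * φ₁ s.2) :
    traceNorm (ptraceMid (outer φ φ) - decohereFst (ptraceMid (outer φ φ))) =
      2 * Real.sqrt (p * (1 - p)) * traceNorm (ptraceFst (outer φ₀ φ₁)) :=
  decoherence_difference_traceNorm_general φ₀ φ₁ p hp φ hφ
end
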